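/- arXiv:1503.07120 — 6 statements merged into one kernel-verified Lean document; each statement's English description precedes it below -/
import Mathlib

section
/- Define P(Z) = (1/4)(1 - Z·conj(Z))^2 - (conj(Z) - Z^2)(Z - conj(Z)^2) for Z in the complex plane. Then with Γ(Z,Z) = conj(Z) - Z^2, Γ(conj Z, conj Z) = Z - conj(Z)^2, Γ(Z, conj Z) = (1 - Z conj Z)/2 (extended to all polynomials in Z, conj Z by bilinearity and the Leibniz rule), one has Γ(P, Z) = -3·Z·P and Γ(P, conj Z) = -3·conj(Z)·P. -/
/-- With `P(Z, W) = (1/4)(1 - ZW)^2 - (W - Z^2)(Z - W^2)` (where `W` plays the role of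
`conj Z`), the carré du champ of the deltoid model, extended by bilinearity and the
Leibniz rule (so that `Γ(P, Z) = Γ(Z,Z) ∂_Z P + Γ(conj Z, Z) ∂_W P` and similarly for
`Γ(P, conj Z)`), satisfies `Γ(P, Z) = -3 Z P` and `Γ(P, conj Z) = -3 conj(Z) P`. -/
theorem deltoid_boundary_gamma (z : ℂ) (w : ℂ) (hw : w = (starRingEnd ℂ) z) :
    (w - z ^ 2) * (-(w / 2) * (1 - z * w) + 2 * z * (z - w ^ 2) - (w - z ^ 2))
        + ((1 - z * w) / 2) * (-(z / 2) * (1 - z * w) - (z - w ^ 2) + 2 * w * (w - z ^ 2))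
      = -3 * z * ((1 / 4) * (1 - z * w) ^ 2 - (w - z ^ 2) * (z - w ^ 2))
    ∧ ((1 - z * w) / 2) * (-(w / 2) * (1 - z * w) + 2 * z * (z - w ^ 2) - (w - z ^ 2))
        + (z - w ^ 2) * (-(z / 2) * (1 - z * w) - (z - w ^ 2) + 2 * w * (w - z ^ 2))
      = -3 * w * ((1 / 4) * (1 - z * w) ^ 2 - (w - z ^ 2) * (z - w ^ 2)) := by
  constructor <;> ring
end

section
/- The operator L defined on polynomials in (Z, conj Z) by L(Z) = -λZ, L(conj Z) = -λ conj Z, the diffusion chain rule, and Γ(Z,Z) = conj Z - Z^2, Γ(conj Z, conj Z) = Z - conj Z^2, Γ(Z, conj Z) = (1 - Z conj Z)/2, commutes with the rotation Z ↦ e^{iθ} Z if and only if e^{3iθ} = 1. Equivalently: the substitution Z ↦ jZ, conj Z ↦ conj(j) conj Z with j a primitive cube root of unity preserves all the structure relations, but Z ↦ e^{iθ}Z with e^{3iθ} ≠ 1 does not. -/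
/-!
Under `Z ↦ uZ`, `conj Z ↦ u⁻¹ conj Z` the relation for `Γ(Z,Z)` is preserved exactly when
`u² = u⁻¹`, the one for `Γ(conj Z, conj Z)` exactly when `u⁻² = u`, and the one for
`Γ(Z, conj Z)` exactly when `u ≠ 0`. For `u ≠ 0` both of the first two conditions say `u³ = 1`.
-/

section RotationOfRelations

variable {K : Type*} [Field K]

theorem rotation_preserves_gamma_ZZ_iff (u : K) :
    (∀ z w : K, u ^ 2 * (w - z ^ 2) = u⁻¹ * w - (u * z) ^ 2) ↔ u ^ 2 = u⁻¹ := by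
  refine ⟨fun h => by simpa using h 0 1, fun h z w => ?_⟩
  rw [mul_pow, h]
  ring

theorem rotation_preserves_gamma_conjZconjZ_iff (u : K) :
    (∀ z w : K, u⁻¹ ^ 2 * (z - w ^ 2) = u * z - (u⁻¹ * w) ^ 2) ↔ u⁻¹ ^ 2 = u := by
  refine ⟨fun h => by simpa using h 1 0, fun h z w => ?_⟩
  rw [mul_pow, h]
  ring

theorem rotation_preserves_gamma_ZconjZ_iff [NeZero (2 : K)] (u : K) :
    (∀ z w : K, u * u⁻¹ * ((1 - z * w) / 2) = (1 - (u * z) * (u⁻¹ * w)) / 2) ↔ u ≠ 0 := by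
  refine ⟨fun h hu => ?_, fun hu z w => ?_⟩
  · have h00 := h 0 0
    simp only [hu, inv_zero, mul_zero, zero_mul, sub_zero] at h00
    exact one_div_ne_zero two_ne_zero h00.symm
  · rw [mul_mul_mul_comm, mul_inv_cancel₀ hu]
    ring

end RotationOfRelations

section CubeRoots

variable {G : Type*} [GroupWithZero G]

theorem sq_eq_inv_iff_pow_three_eq_one {u : G} (hu : u ≠ 0) : u ^ 2 = u⁻¹ ↔ u ^ 3 = 1 := by
  rw [← mul_eq_one_iff_eq_inv₀ hu, ← pow_succ]

theorem inv_sq_eq_self_iff_pow_three_eq_one {u : G} (hu : u ≠ 0) :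
    u⁻¹ ^ 2 = u ↔ u ^ 3 = 1 := by
  rw [inv_pow, inv_eq_iff_eq_inv, sq_eq_inv_iff_pow_three_eq_one hu]

theorem ne_zero_of_pow_three_eq_one {u : G} (h : u ^ 3 = 1) : u ≠ 0 := by
  rintro rfl
  simp at h

end CubeRoots

theorem deltoid_rotation_invariance_general (u : ℂ) :
    ((∀ z w : ℂ, u ^ 2 * (w - z ^ 2) = u⁻¹ * w - (u * z) ^ 2)
      ∧ (∀ z w : ℂ, (u⁻¹) ^ 2 * (z - w ^ 2) = u * z - (u⁻¹ * w) ^ 2)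
      ∧ (∀ z w : ℂ, u * u⁻¹ * ((1 - z * w) / 2) = (1 - (u * z) * (u⁻¹ * w)) / 2))
    ↔ u ^ 3 = 1 := by
  rw [rotation_preserves_gamma_ZZ_iff, rotation_preserves_gamma_conjZconjZ_iff,
    rotation_preserves_gamma_ZconjZ_iff]
  constructor
  · rintro ⟨hZZ, -, hu⟩
    exact (sq_eq_inv_iff_pow_three_eq_one hu).mp hZZ
  · intro h
    have hu := ne_zero_of_pow_three_eq_one h
    exact ⟨(sq_eq_inv_iff_pow_three_eq_one hu).mpr h,
      (inv_sq_eq_self_iff_pow_three_eq_one hu).mpr h, hu⟩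

/-- The deltoid structure relations are invariant under the rotation
`Z ↦ uZ`, `conj Z ↦ u⁻¹ conj Z` (with `|u| = 1`) if and only if `u^3 = 1`:
the relation `Γ(Z,Z) = conj Z - Z^2` transforms to `u^2 Γ(Z,Z) = u⁻¹ conj Z - (uZ)^2`,
`Γ(conj Z, conj Z) = Z - conj Z^2` to `u⁻² Γ(conj Z,conj Z) = uZ - (u⁻¹ conj Z)^2`,
and `Γ(Z, conj Z) = (1 - Z conj Z)/2` is always preserved. -/
theorem deltoid_rotation_invariance (u : ℂ) (hu : ‖u‖ = 1) :
    ((∀ z w : ℂ, u ^ 2 * (w - z ^ 2) = u⁻¹ * w - (u * z) ^ 2)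
      ∧ (∀ z w : ℂ, (u⁻¹) ^ 2 * (z - w ^ 2) = u * z - (u⁻¹ * w) ^ 2)
      ∧ (∀ z w : ℂ, u * u⁻¹ * ((1 - z * w) / 2) = (1 - (u * z) * (u⁻¹ * w)) / 2))
    ↔ u ^ 3 = 1 :=
  deltoid_rotation_invariance_general u
end

section
/- For real numbers x1, x2, x3 with 0 ≤ x_i ≤ 1, set S = x1+x2+x3 and suppose x1² + x2² + x3² = 1 + (S-1)²/2. Then x1·x2·x3 ≤ (S-1)/2. -/
/-- Constrained maximization: if `0 ≤ x_i ≤ 1`, `S = x1+x2+x3` and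
`x1² + x2² + x3² = 1 + (S-1)²/2`, then `x1 x2 x3 ≤ (S-1)/2`. -/
theorem product_bound_on_P2_zero (x1 x2 x3 : ℝ)
    (h1 : 0 ≤ x1) (h1' : x1 ≤ 1) (h2 : 0 ≤ x2) (h2' : x2 ≤ 1)
    (h3 : 0 ≤ x3) (h3' : x3 ≤ 1)
    (hS : x1 ^ 2 + x2 ^ 2 + x3 ^ 2 = 1 + (x1 + x2 + x3 - 1) ^ 2 / 2) :
    x1 * x2 * x3 ≤ (x1 + x2 + x3 - 1) / 2 := by
  have hq1 : x1 * (1 - x1) ≥ 0 := mul_nonneg h1 (by linarith)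
  have hq2 : x2 * (1 - x2) ≥ 0 := mul_nonneg h2 (by linarith)
  have hq3 : x3 * (1 - x3) ≥ 0 := mul_nonneg h3 (by linarith)
  -- t = S - 1; from constraint, t^2 = 2*(S2) - 2 ≤ 2*S - 2, so t ≤ 2; also S2 ≥ 1 so S ≥ 1
  have ht2 : x1 + x2 + x3 - 1 ≤ 2 := by nlinarith
  have ht0 : 0 ≤ x1 + x2 + x3 - 1 := by nlinarith [sq_nonneg (x1 + x2 + x3 - 1)]
  have hprod : (1 - x1) * (1 - x2) * (1 - x3) ≥ 0 :=
    mul_nonneg (mul_nonneg (by linarith) (by linarith)) (by linarith)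
  nlinarith [mul_nonneg ht0 (by linarith : (0:ℝ) ≤ 2 - (x1 + x2 + x3 - 1))]
end

section
/- Define on C³ (variables z1,z2,z3) the carré du champ: Γ̂(z_i,z_i) = -z_i², Γ̂(z̄_i,z̄_i) = -z̄_i², Γ̂(z_i,z_j) = (3/2) z̄_{c(i,j)} - z_i z_j for i≠j, Γ̂(z̄_i,z̄_j) = (3/2) z_{c(i,j)} - z̄_i z̄_j for i≠j, Γ̂(z_i, z̄_j) = (3/2)δ_{ij} - (1/2) z_i z̄_j, where c(i,j) is the index distinct from i and j. Then Z = (z1+z2+z3)/3 satisfies Γ̂(Z,Z) = conj(Z) - Z², Γ̂(conj Z, conj Z) = Z - conj(Z)², and Γ̂(Z, conj Z) = (1 - Z conj Z)/2. -/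
/-- In the 6-dimensional model on `ℂ³` with variables `z_i` and their conjugates `w_i`,
where `Γ̂(z_i,z_i) = -z_i²`, `Γ̂(z_i,z_j) = (3/2) w_{c(i,j)} - z_i z_j` (i ≠ j),
`Γ̂(w_i,w_i) = -w_i²`, `Γ̂(w_i,w_j) = (3/2) z_{c(i,j)} - w_i w_j` (i ≠ j),
`Γ̂(z_i,w_j) = (3/2)δ_{ij} - (1/2) z_i w_j`, the function `Z = (z1+z2+z3)/3`
(with `conj Z = (w1+w2+w3)/3`) satisfies the deltoid relations
`Γ̂(Z,Z) = conj Z - Z²`, `Γ̂(conj Z, conj Z) = Z - conj Z²`,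
`Γ̂(Z, conj Z) = (1 - Z conj Z)/2`. -/
theorem six_dim_model_projects (z1 z2 z3 w1 w2 w3 : ℂ)
    (hw1 : w1 = (starRingEnd ℂ) z1) (hw2 : w2 = (starRingEnd ℂ) z2)
    (hw3 : w3 = (starRingEnd ℂ) z3) :
    (1 / 9) * ((-z1 ^ 2) + (-z2 ^ 2) + (-z3 ^ 2)
        + 2 * ((3 / 2) * w3 - z1 * z2) + 2 * ((3 / 2) * w2 - z1 * z3)
        + 2 * ((3 / 2) * w1 - z2 * z3))
      = (w1 + w2 + w3) / 3 - ((z1 + z2 + z3) / 3) ^ 2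
    ∧ (1 / 9) * ((-w1 ^ 2) + (-w2 ^ 2) + (-w3 ^ 2)
        + 2 * ((3 / 2) * z3 - w1 * w2) + 2 * ((3 / 2) * z2 - w1 * w3)
        + 2 * ((3 / 2) * z1 - w2 * w3))
      = (z1 + z2 + z3) / 3 - ((w1 + w2 + w3) / 3) ^ 2
    ∧ (1 / 9) * (((3 / 2) - (1 / 2) * z1 * w1) + (-(1 / 2) * z1 * w2) + (-(1 / 2) * z1 * w3)
        + (-(1 / 2) * z2 * w1) + ((3 / 2) - (1 / 2) * z2 * w2) + (-(1 / 2) * z2 * w3)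
        + (-(1 / 2) * z3 * w1) + (-(1 / 2) * z3 * w2) + ((3 / 2) - (1 / 2) * z3 * w3))
      = (1 - ((z1 + z2 + z3) / 3) * ((w1 + w2 + w3) / 3)) / 2 := by
  refine ⟨by ring, by ring, by ring⟩
end

section
/- Under the substitution s = Z + conj(Z), p = Z·conj(Z), the deltoid carré du champ (Γ(Z,Z) = conj Z - Z², Γ(conj Z,conj Z) = Z - conj Z², Γ(Z,conj Z) = (1 - Z conj Z)/2, extended by bilinearity and Leibniz) satisfies: Γ(s,s) = p - s² + s + 1, Γ(s,p) = s² - 2p - (3/2)sp + s/2, and Γ(p,p) = s³ - 3p² - 3sp + p. -/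
/-- Under `s = Z + conj Z`, `p = Z conj Z`, the deltoid carré du champ
(`Γ(Z,Z) = conj Z - Z²`, `Γ(conj Z, conj Z) = Z - conj Z²`,
`Γ(Z, conj Z) = (1 - Z conj Z)/2`, extended by bilinearity and Leibniz) gives
`Γ(s,s) = p - s² + s + 1`, `Γ(s,p) = s² - 2p - (3/2) s p + s/2`,
`Γ(p,p) = s³ - 3p² - 3sp + p`. -/
theorem G2_gamma_from_deltoid (z w : ℂ) (hw : w = (starRingEnd ℂ) z) :
    ((w - z ^ 2) + 2 * ((1 - z * w) / 2) + (z - w ^ 2))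
      = z * w - (z + w) ^ 2 + (z + w) + 1
    ∧ (w * (w - z ^ 2) + (z + w) * ((1 - z * w) / 2) + z * (z - w ^ 2))
      = (z + w) ^ 2 - 2 * (z * w) - (3 / 2) * (z + w) * (z * w) + (z + w) / 2
    ∧ (w ^ 2 * (w - z ^ 2) + 2 * (z * w) * ((1 - z * w) / 2) + z ^ 2 * (z - w ^ 2))
      = (z + w) ^ 3 - 3 * (z * w) ^ 2 - 3 * (z + w) * (z * w) + z * w := by
  refine ⟨by ring, by ring, by ring⟩
end

section
/- Let Γ be the G2-model carré du champ on variables (s,p): Γ(s,s) = p - s² + s + 1, Γ(s,p) = s² - 2p - (3/2)sp + s/2, Γ(p,p) = s³ - 3p² - 3sp + p. Let Q1 = s² - 4p and Q2 = 3p² + 12sp + 6p - 4s³ - 1. Then Γ(Q1, s) = (-2s - 2)·Q1, Γ(Q1, p) = (-3p - 2s + 1)·Q1, Γ(Q2, s) = -3s·Q2, and Γ(Q2, p) = -6p·Q2. -/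
/-- Boundary equations for the `G2` model: with
`Γ(s,s) = p - s² + s + 1`, `Γ(s,p) = s² - 2p - (3/2)sp + s/2`,
`Γ(p,p) = s³ - 3p² - 3sp + p`, `Q1 = s² - 4p`, `Q2 = 3p² + 12sp + 6p - 4s³ - 1`,
one has (computing `Γ(F, G) = Γ(s,s)∂_sF∂_sG + Γ(s,p)(∂_sF∂_pG + ∂_pF∂_sG) + Γ(p,p)∂_pF∂_pG`):
`Γ(Q1, s) = (-2s-2) Q1`, `Γ(Q1, p) = (-3p-2s+1) Q1`,
`Γ(Q2, s) = -3s Q2`, `Γ(Q2, p) = -6p Q2`. -/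
theorem G2_boundary_gamma (s p : ℝ) :
    (p - s ^ 2 + s + 1) * (2 * s) + (s ^ 2 - 2 * p - (3 / 2) * s * p + s / 2) * (-4)
      = (-2 * s - 2) * (s ^ 2 - 4 * p)
    ∧ (s ^ 2 - 2 * p - (3 / 2) * s * p + s / 2) * (2 * s)
        + (s ^ 3 - 3 * p ^ 2 - 3 * s * p + p) * (-4)
      = (-3 * p - 2 * s + 1) * (s ^ 2 - 4 * p)
    ∧ (p - s ^ 2 + s + 1) * (12 * p - 12 * s ^ 2)
        + (s ^ 2 - 2 * p - (3 / 2) * s * p + s / 2) * (6 * p + 12 * s + 6)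
      = (-3 * s) * (3 * p ^ 2 + 12 * s * p + 6 * p - 4 * s ^ 3 - 1)
    ∧ (s ^ 2 - 2 * p - (3 / 2) * s * p + s / 2) * (12 * p - 12 * s ^ 2)
        + (s ^ 3 - 3 * p ^ 2 - 3 * s * p + p) * (6 * p + 12 * s + 6)
      = (-6 * p) * (3 * p ^ 2 + 12 * s * p + 6 * p - 4 * s ^ 3 - 1) := by
  refine ⟨by ring, by ring, by ring, by ring⟩
end
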